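/- Let b : ℝ → ℝ be continuous, let γ, k ∈ ℝ, and let φ : ℝ → ℝ be twice continuously differentiable with φ(x) > 0 for all x ∈ ℝ, satisfying φ'' + b φ' + γ b φ = k φ on ℝ, and such that φ'(x) + γφ(x) > 0 for all x ∈ ℝ. Define g(x) := ∫₀ˣ (γφ'(y) + kφ(y)) / (φ'(y) + γφ(y)) dy. Then the function μ := exp ∘ g is twice continuously differentiable and satisfies μ'' − b μ' + (γ b − k) μ = 0 on ℝ. -/

import Mathlib

/-!
With `ψ = φ' + γφ` and `N = γφ' + kφ`, the equation for `φ` is the linear system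
`N' = (k - γb) ψ`, `ψ' = N - bψ`. Hence `f = N / ψ = g'` solves the Riccati equation
`f' = (k - γb) + b f - f²`, and the substitution `μ = exp (∫ f)` linearises it into
`μ'' - b μ' + (γb - k) μ = 0`.
-/

open Real

lemma contDiff_two_of_hasDerivAt {g f : ℝ → ℝ} (hg : ∀ x, HasDerivAt g (f x) x)
    (hf : ContDiff ℝ 1 f) : ContDiff ℝ 2 g := by
  have hderiv : deriv g = f := funext fun x => (hg x).deriv
  rw [show (2 : WithTop ℕ∞) = 1 + 1 by norm_num, contDiff_succ_iff_deriv]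
  exact ⟨fun x => (hg x).differentiableAt, by simp, hderiv ▸ hf⟩

lemma hasDerivAt_div_of_linear_system {N ψ : ℝ → ℝ} {a c x : ℝ}
    (hN : HasDerivAt N (a * ψ x) x) (hψ : HasDerivAt ψ (N x - c * ψ x) x) (hψ0 : ψ x ≠ 0) :
    HasDerivAt (fun y => N y / ψ y) (a + c * (N x / ψ x) - (N x / ψ x) ^ 2) x := by
  refine (hN.div hψ hψ0).congr_deriv ?_
  field_simp
  ring

lemma exp_comp_of_riccati {b g f : ℝ → ℝ} {c x : ℝ} (hg : ∀ y, HasDerivAt g (f y) y)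
    (hf : HasDerivAt f (c + b x * f x - f x ^ 2) x) :
    deriv (deriv fun y => exp (g y)) x - b x * deriv (fun y => exp (g y)) x
      - c * exp (g x) = 0 := by
  have hderiv : deriv (fun y => exp (g y)) = fun y => exp (g y) * f y :=
    funext fun y => (hg y).exp.deriv
  have hderiv2 : HasDerivAt (fun y => exp (g y) * f y)
      (exp (g x) * f x * f x + exp (g x) * (c + b x * f x - f x ^ 2)) x :=
    (hg x).exp.mul hf
  rw [hderiv, hderiv2.deriv]
  ring

section SecondOrderODE

variable {b φ : ℝ → ℝ} {γ k x : ℝ}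

lemma hasDerivAt_const_mul_deriv_add_const_mul_of_ode (hφ : ContDiff ℝ 2 φ)
    (heq : deriv (deriv φ) x + b x * deriv φ x + γ * b x * φ x = k * φ x) :
    HasDerivAt (fun y => γ * deriv φ y + k * φ y)
      ((k - γ * b x) * (deriv φ x + γ * φ x)) x := by
  have hφ' := (hφ.differentiable two_ne_zero x).hasDerivAt
  have hφ'' := ((contDiff_succ_iff_deriv.mp hφ).2.2.differentiable one_ne_zero x).hasDerivAt
  refine ((hφ''.const_mul γ).add (hφ'.const_mul k)).congr_deriv ?_
  linear_combination γ * heq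

lemma hasDerivAt_deriv_add_const_mul_of_ode (hφ : ContDiff ℝ 2 φ)
    (heq : deriv (deriv φ) x + b x * deriv φ x + γ * b x * φ x = k * φ x) :
    HasDerivAt (fun y => deriv φ y + γ * φ y)
      ((γ * deriv φ x + k * φ x) - b x * (deriv φ x + γ * φ x)) x := by
  have hφ' := (hφ.differentiable two_ne_zero x).hasDerivAt
  have hφ'' := ((contDiff_succ_iff_deriv.mp hφ).2.2.differentiable one_ne_zero x).hasDerivAt
  refine (hφ''.add (hφ'.const_mul γ)).congr_deriv ?_
  linear_combination heq

end SecondOrderODE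

theorem stmt5 (b : ℝ → ℝ) (γ k : ℝ) (φ : ℝ → ℝ)
    (hφ : ContDiff ℝ 2 φ)
    (heq : ∀ x : ℝ,
      deriv (deriv φ) x + b x * deriv φ x + γ * b x * φ x = k * φ x)
    (hm : ∀ x : ℝ, 0 < deriv φ x + γ * φ x)
    (g : ℝ → ℝ)
    (hg : g = fun x => ∫ y in (0:ℝ)..x,
      (γ * deriv φ y + k * φ y) / (deriv φ y + γ * φ y))
    (μ : ℝ → ℝ) (hμ : μ = fun x => Real.exp (g x)) :
    ContDiff ℝ 2 μ ∧
    ∀ x : ℝ, deriv (deriv μ) x - b x * deriv μ x + (γ * b x - k) * μ x = 0 := by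
  set f : ℝ → ℝ := fun y => (γ * deriv φ y + k * φ y) / (deriv φ y + γ * φ y)
  have hφ' : ContDiff ℝ 1 (deriv φ) := (contDiff_succ_iff_deriv.mp hφ).2.2
  have hφ1 : ContDiff ℝ 1 φ := hφ.of_le one_le_two
  have hf : ContDiff ℝ 1 f :=
    ((contDiff_const.mul hφ').add (contDiff_const.mul hφ1)).div
      (hφ'.add (contDiff_const.mul hφ1)) fun x => (hm x).ne'
  have hg' : ∀ x, HasDerivAt g (f x) x := fun x => by
    rw [hg]
    exact (hf.continuous.integral_hasStrictDerivAt 0 x).hasDerivAt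
  subst hμ
  refine ⟨contDiff_exp.comp (contDiff_two_of_hasDerivAt hg' hf), fun x => ?_⟩
  have hriccati : HasDerivAt f ((k - γ * b x) + b x * f x - f x ^ 2) x :=
    hasDerivAt_div_of_linear_system (hasDerivAt_const_mul_deriv_add_const_mul_of_ode hφ (heq x))
      (hasDerivAt_deriv_add_const_mul_of_ode hφ (heq x)) (hm x).ne'
  linear_combination exp_comp_of_riccati hg' hriccati
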